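/- arXiv:1110.5474 — 4 statements merged into one kernel-verified Lean document; each statement's English description precedes it below -/
import Mathlib

section
/- Let ω be a ℂ³-valued 1-form on a surface x₀ with unit normal N₀ (|N₀|² = 1, N₀ᵀdx₀ = 0) satisfying ω ×∧ dx₀ = 0 and N₀ᵀω = 0 (i.e. ω is tangential). Writing the difference of second fundamental forms as s = N₀ᵀ(ω × dx₀) = s₁₁du² + s₁₂du dv + s₂₁dv du + s₂₂dv², the condition ω ×∧ dx₀ = 0 is equivalent to s₁₂ = s₂₁. -/
open Matrix

/-! Let `d = ω₁ × ∂ᵥx₀ − ω₂ × ∂ᵤx₀`. By the triple product identities, `∂ᵤx₀ ⬝ d = −c (N₀ ⬝ ω₁)`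
and `∂ᵥx₀ ⬝ d = −c (N₀ ⬝ ω₂)`, which vanish because `ω` is tangential, while `N₀ ⬝ d = s₁₂ − s₂₁`.
Since `N₀, ∂ᵤx₀, ∂ᵥx₀` have triple product `c (N₀ ⬝ N₀) = c ≠ 0`, they span `ℂ³`, so `d = 0`
exactly when `s₁₂ = s₂₁`. -/

theorem eq_zero_of_dotProduct_eq_zero_of_triple_product_ne_zero {K : Type*} [Field K]
    {a b c v : Fin 3 → K} (habc : a ⬝ᵥ b ⨯₃ c ≠ 0)
    (ha : a ⬝ᵥ v = 0) (hb : b ⬝ᵥ v = 0) (hc : c ⬝ᵥ v = 0) : v = 0 := by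
  rw [triple_product_eq_det] at habc
  refine eq_zero_of_mulVec_eq_zero habc ?_
  ext i
  fin_cases i <;> simp [mulVec, ha, hb, hc]

section
variable {R : Type*} [CommRing R]

theorem dot_cross_sub_cross_left (u v w₁ w₂ : Fin 3 → R) :
    u ⬝ᵥ (w₁ ⨯₃ v - w₂ ⨯₃ u) = -(w₁ ⬝ᵥ u ⨯₃ v) := by
  rw [dotProduct_sub, dot_cross_self, sub_zero, triple_product_permutation, ← cross_anticomm,
    dotProduct_neg]

theorem dot_cross_sub_cross_right (u v w₁ w₂ : Fin 3 → R) :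
    v ⬝ᵥ (w₁ ⨯₃ v - w₂ ⨯₃ u) = -(w₂ ⬝ᵥ u ⨯₃ v) := by
  rw [dotProduct_sub, dot_cross_self, zero_sub, triple_product_permutation]

end

theorem omega_wedge_dx_eq_zero_iff_s_symm_general
    (Xu Xv N₀ ω₁ ω₂ : Fin 3 → ℂ) (c : ℂ) (hc : c ≠ 0)
    (hcross : Xu ⨯₃ Xv = c • N₀)
    (hN : N₀ ⬝ᵥ N₀ = 1)
    (hω₁ : N₀ ⬝ᵥ ω₁ = 0) (hω₂ : N₀ ⬝ᵥ ω₂ = 0) :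
    ω₁ ⨯₃ Xv - ω₂ ⨯₃ Xu = 0 ↔ N₀ ⬝ᵥ (ω₁ ⨯₃ Xv) = N₀ ⬝ᵥ (ω₂ ⨯₃ Xu) := by
  refine ⟨fun h => ?_, fun h => ?_⟩
  · rw [← sub_eq_zero, ← dotProduct_sub, h, dotProduct_zero]
  have hframe : N₀ ⬝ᵥ Xu ⨯₃ Xv ≠ 0 := by
    rwa [hcross, dotProduct_smul, hN, smul_eq_mul, mul_one]
  refine eq_zero_of_dotProduct_eq_zero_of_triple_product_ne_zero hframe
    (by rw [dotProduct_sub, h, sub_self]) ?_ ?_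
  · rw [dot_cross_sub_cross_left, hcross, dotProduct_smul, dotProduct_comm, hω₁, smul_zero,
      neg_zero]
  · rw [dot_cross_sub_cross_right, hcross, dotProduct_smul, dotProduct_comm, hω₂, smul_zero,
      neg_zero]

/-- For a tangential ℂ³-valued 1-form `ω = ω₁du + ω₂dv` on a surface `x₀` with unit
normal `N₀` (proportional to `∂ᵤx₀ × ∂ᵥx₀`), the condition `ω ×∧ dx₀ = 0`
(i.e. `ω₁ × ∂ᵥx₀ − ω₂ × ∂ᵤx₀ = 0`) is equivalent to the symmetry `s₁₂ = s₂₁` of the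
array `sᵢⱼ = N₀ᵀ(ωᵢ × ∂ⱼx₀)`. -/
theorem omega_wedge_dx_eq_zero_iff_s_symm
    (Xu Xv N₀ ω₁ ω₂ : Fin 3 → ℂ) (c : ℂ) (hc : c ≠ 0)
    (hcross : Xu ⨯₃ Xv = c • N₀)
    (hN : N₀ ⬝ᵥ N₀ = 1)
    (hXu : N₀ ⬝ᵥ Xu = 0) (hXv : N₀ ⬝ᵥ Xv = 0)
    (hω₁ : N₀ ⬝ᵥ ω₁ = 0) (hω₂ : N₀ ⬝ᵥ ω₂ = 0) :
    ω₁ ⨯₃ Xv - ω₂ ⨯₃ Xu = 0 ↔ N₀ ⬝ᵥ (ω₁ ⨯₃ Xv) = N₀ ⬝ᵥ (ω₂ ⨯₃ Xu) :=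
  omega_wedge_dx_eq_zero_iff_s_symm_general Xu Xv N₀ ω₁ ω₂ c hc hcross hN hω₁ hω₂
end

section
/- If x₀ rolls on x with rotation R (det R = 1, Rdx₀ = dx) and ω := N₀ × R⁻¹dR N₀ is the induced flat connection form, then the connection form of the rolling with the reflected normal, ω' := N₀ × R'⁻¹dR' N₀ with R' = R(I − 2N₀N₀ᵀ), equals ω' = −ω − 2N₀ × dN₀. -/
open Matrix

/-!
Write `H = I − 2N₀N₀ᵀ`, so `R' = RH`. With `N₀ᵀN₀ = 1` the reflection `H` is an involution with
`HN₀ = −N₀` fixing `N₀⊥`, hence `R'⁻¹ = HRᵀ`. Differentiating `H` gives `(dH)N₀ = −2dN₀`, so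
`R'⁻¹dR'N₀ = −H(R⁻¹dR N₀) − 2dN₀`. Finally `N₀ × Hv = N₀ × v`, since `H` only changes the
`N₀`-component of `v`.
-/

namespace Matrix

section Householder

variable {n α : Type*} [Fintype n] [CommRing α]

lemma vecMulVec_mulVec_eq_smul (u v w : n → α) : vecMulVec u v *ᵥ w = (v ⬝ᵥ w) • u := by
  rw [vecMulVec_mulVec, op_smul_eq_smul]

/-- `−½` times the derivative of `householder` along `u`, applied to `N`. -/
lemma vecMulVec_add_vecMulVec_mulVec {N u : n → α} (hN : N ⬝ᵥ N = 1) (hu : N ⬝ᵥ u = 0) :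
    (vecMulVec u N + vecMulVec N u) *ᵥ N = u := by
  rw [add_mulVec, vecMulVec_mulVec_eq_smul, vecMulVec_mulVec_eq_smul, hN, dotProduct_comm, hu,
    one_smul, zero_smul, add_zero]

variable [DecidableEq n]

/-- The reflection `I − 2NNᵀ` in the hyperplane `N⊥`, for a unit vector `N`. -/
def householder (N : n → α) : Matrix n n α := 1 - (2 : α) • vecMulVec N N

lemma householder_mulVec (N v : n → α) :
    householder N *ᵥ v = v - (2 * (N ⬝ᵥ v)) • N := by
  rw [householder, sub_mulVec, one_mulVec, smul_mulVec, vecMulVec_mulVec_eq_smul, smul_smul]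

lemma householder_mulVec_self {N : n → α} (hN : N ⬝ᵥ N = 1) : householder N *ᵥ N = -N := by
  rw [householder_mulVec, hN]
  module

lemma householder_mulVec_of_dotProduct_eq_zero {N v : n → α} (h : N ⬝ᵥ v = 0) :
    householder N *ᵥ v = v := by
  rw [householder_mulVec, h, mul_zero, zero_smul, sub_zero]

lemma householder_mul_self {N : n → α} (hN : N ⬝ᵥ N = 1) :
    householder N * householder N = 1 := by
  have hP : vecMulVec N N * vecMulVec N N = vecMulVec N N := by
    rw [vecMulVec_mul_vecMulVec, hN, one_smul]
  simp only [householder, sub_mul, mul_sub, Matrix.one_mul, Matrix.mul_one, Matrix.smul_mul,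
    Matrix.mul_smul, hP]
  module

lemma inv_mul_householder {R : Matrix n n α} (hR : Rᵀ * R = 1) {N : n → α} (hN : N ⬝ᵥ N = 1) :
    (R * householder N)⁻¹ = householder N * Rᵀ :=
  inv_eq_left_inv <| by
    rw [Matrix.mul_assoc, ← Matrix.mul_assoc Rᵀ, hR, Matrix.one_mul, householder_mul_self hN]

lemma cross_householder_mulVec (N v : Fin 3 → α) : N ⨯₃ (householder N *ᵥ v) = N ⨯₃ v := by
  rw [householder_mulVec, map_sub, _root_.map_smul, cross_self, smul_zero, sub_zero]

end Householder

end Matrix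

theorem reflected_connection_form_general
    (R dR : Matrix (Fin 3) (Fin 3) ℂ) (N₀ dN₀ : Fin 3 → ℂ)
    (hR : Rᵀ * R = 1)
    (hN : N₀ ⬝ᵥ N₀ = 1) (hdN : N₀ ⬝ᵥ dN₀ = 0)
    (R' : Matrix (Fin 3) (Fin 3) ℂ)
    (hR' : R' = R * (1 - (2 : ℂ) • vecMulVec N₀ N₀))
    (dR' : Matrix (Fin 3) (Fin 3) ℂ)
    (hdR' : dR' = dR * (1 - (2 : ℂ) • vecMulVec N₀ N₀)
        - (2 : ℂ) • (R * (vecMulVec dN₀ N₀ + vecMulVec N₀ dN₀))) :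
    N₀ ⨯₃ ((R'⁻¹ * dR') *ᵥ N₀)
      = -(N₀ ⨯₃ ((R⁻¹ * dR) *ᵥ N₀)) - (2 : ℂ) • (N₀ ⨯₃ dN₀) := by
  rw [← householder] at hR' hdR'
  have hRinv : R⁻¹ = Rᵀ := inv_eq_left_inv hR
  have hdR'N : dR' *ᵥ N₀ = -(dR *ᵥ N₀) - (2 : ℂ) • (R *ᵥ dN₀) := by
    rw [hdR', sub_mulVec, ← mulVec_mulVec, householder_mulVec_self hN, mulVec_neg, smul_mulVec,
      ← mulVec_mulVec, vecMulVec_add_vecMulVec_mulVec hN hdN]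
  have hR'dR'N : (R'⁻¹ * dR') *ᵥ N₀ = -(householder N₀ *ᵥ ((Rᵀ * dR) *ᵥ N₀)) - (2 : ℂ) • dN₀ := by
    rw [hR', inv_mul_householder hR hN, ← mulVec_mulVec, ← mulVec_mulVec, hdR'N, mulVec_sub,
      mulVec_neg, mulVec_smul, mulVec_mulVec dN₀ Rᵀ R, hR, one_mulVec, mulVec_sub, mulVec_neg,
      mulVec_smul, householder_mulVec_of_dotProduct_eq_zero hdN, mulVec_mulVec N₀ Rᵀ dR]
  rw [hR'dR'N, hRinv, map_sub, map_neg, _root_.map_smul, cross_householder_mulVec]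

/-- If `x₀` rolls on `x` with rotation `R` (so `ω = N₀ × R⁻¹dR N₀`), then the connection
form of the reflected rolling `R' = R(I − 2N₀N₀ᵀ)` is `ω' = −ω − 2N₀ × dN₀`.
Pointwise version: `R, dR` are the rotation and its derivative at a point, `N₀, dN₀`
the unit normal and its derivative. -/
theorem reflected_connection_form
    (R dR : Matrix (Fin 3) (Fin 3) ℂ) (N₀ dN₀ : Fin 3 → ℂ)
    (hR : Rᵀ * R = 1) (hdet : R.det = 1)
    (hN : N₀ ⬝ᵥ N₀ = 1) (hdN : N₀ ⬝ᵥ dN₀ = 0)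
    (horth : dRᵀ * R + Rᵀ * dR = 0)
    (R' : Matrix (Fin 3) (Fin 3) ℂ)
    (hR' : R' = R * (1 - (2 : ℂ) • vecMulVec N₀ N₀))
    (dR' : Matrix (Fin 3) (Fin 3) ℂ)
    (hdR' : dR' = dR * (1 - (2 : ℂ) • vecMulVec N₀ N₀)
        - (2 : ℂ) • (R * (vecMulVec dN₀ N₀ + vecMulVec N₀ dN₀))) :
    N₀ ⨯₃ ((R'⁻¹ * dR') *ᵥ N₀)
      = -(N₀ ⨯₃ ((R⁻¹ * dR) *ᵥ N₀)) - (2 : ℂ) • (N₀ ⨯₃ dN₀) :=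
  reflected_connection_form_general R dR N₀ dN₀ hR hN hdN R' hR' dR' hdR'
end

section
/- Let A be an invertible symmetric 3×3 complex matrix, and let x₀, N₀ ∈ ℂ³ with N₀ᵀN₀ = 1. Suppose that for both signs ± there exist scalars F_± with F_±(N₀ᵀx₀ · √A x₀ ± i(√A)⁻¹N₀ × √A x₀ − (√A)⁻¹N₀) = N₀ᵀx₀ · √A N₀ ± i(√A)⁻¹N₀ × √A N₀ (an equality of vectors in ℂ³), where √A is a symmetric square root of A. Then F_± = N₀ᵀx₀ / ((N₀ᵀx₀)² − N₀ᵀA⁻¹N₀) and (I₃ − N₀N₀ᵀ)(A⁻¹ − x₀x₀ᵀ)N₀ = 0. -/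
/-!
Put `n = (√A)⁻¹N₀`, `y = √A x₀`, `m = √A N₀`, `σ = N₀ᵀx₀`, `τ = N₀ᵀA⁻¹N₀`; symmetry of `√A` gives
`n·y = σ`, `n·m = 1`, `n·n = τ`. Dotting either equation with `n` kills the cross products and
leaves `F (σ² − τ) = σ`. Adding and subtracting the two equations separates
`F (σy − n) = σm` from `F (n × y) = n × m`, and crossing the first equation with `n` then gives
`F (σn − τy) = n − τm`. Together these yield `σy = (σ² − τ)m + n`, i.e.
`σx₀ = (σ² − τ)N₀ + A⁻¹N₀`, so `(A⁻¹ − x₀x₀ᵀ)N₀` is a multiple of `N₀` and is annihilated by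
the projection `I₃ − N₀N₀ᵀ`.
-/

open Matrix

theorem eq_and_eq_of_add_smul_eq_of_sub_smul_eq {K M : Type*} [Field K] [AddCommGroup M]
    [Module K M] {c : K} (h2 : (2 : K) ≠ 0) (hc : c ≠ 0) {P Q P' Q' : M}
    (hadd : P + c • Q = P' + c • Q') (hsub : P - c • Q = P' - c • Q') : P = P' ∧ Q = Q' := by
  constructor
  · apply smul_right_injective M h2
    calc (2 : K) • P = (P + c • Q) + (P - c • Q) := by module
      _ = (2 : K) • P' := by rw [hadd, hsub]; module
  · apply smul_right_injective M (mul_ne_zero h2 hc)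
    calc (2 * c) • Q = (P + c • Q) - (P - c • Q) := by module
      _ = (2 * c) • Q' := by rw [hadd, hsub]; module

section Tangency

variable {K : Type*} [Field K] {n y m : Fin 3 → K} {σ τ c F : K}

theorem mul_eq_of_tangency (hny : n ⬝ᵥ y = σ) (hnm : n ⬝ᵥ m = 1) (hnn : n ⬝ᵥ n = τ)
    (h : F • (σ • y + c • n ⨯₃ y - n) = σ • m + c • n ⨯₃ m) :
    F * (σ ^ 2 - τ) = σ := by
  have := congrArg (n ⬝ᵥ ·) h
  simp only [dotProduct_add, dotProduct_sub, dotProduct_smul, dot_self_cross, smul_eq_mul,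
    hny, hnm, hnn] at this
  linear_combination this

theorem smul_sub_eq_of_tangency (hny : n ⬝ᵥ y = σ) (hnm : n ⬝ᵥ m = 1) (hnn : n ⬝ᵥ n = τ)
    (hc : c ≠ 0) (hcross : F • n ⨯₃ y = n ⨯₃ m)
    (h : F • (σ • y + c • n ⨯₃ y - n) = σ • m + c • n ⨯₃ m) :
    F • (σ • n - τ • y) = n - τ • m := by
  have hx := congrArg (n ⨯₃ ·) h
  simp only [map_add, map_sub, map_smul, cross_self, cross_cross_eq_smul_sub_smul', hny, hnm,
    hnn] at hx
  apply smul_right_injective _ hc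
  calc c • F • (σ • n - τ • y)
      = F • (σ • (n ⨯₃ y) + c • ((σ • n) - τ • y) - 0) - σ • F • n ⨯₃ y := by module
    _ = σ • (n ⨯₃ m) + c • ((1 : K) • n - τ • m) - σ • n ⨯₃ m := by rw [hx, hcross]
    _ = c • (n - τ • m) := by module

theorem smul_eq_add_of_tangency (h2 : (2 : K) ≠ 0) (hc : c ≠ 0)
    (hny : n ⬝ᵥ y = σ) (hnm : n ⬝ᵥ m = 1) (hnn : n ⬝ᵥ n = τ)
    (hp : F • (σ • y + c • n ⨯₃ y - n) = σ • m + c • n ⨯₃ m)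
    (hm : F • (σ • y - c • n ⨯₃ y - n) = σ • m - c • n ⨯₃ m) :
    σ • y = (σ ^ 2 - τ) • m + n := by
  obtain ⟨hsum, hcross⟩ : F • (σ • y - n) = σ • m ∧ F • n ⨯₃ y = n ⨯₃ m := by
    refine eq_and_eq_of_add_smul_eq_of_sub_smul_eq h2 hc ?_ ?_
    · rw [← hp]; module
    · rw [← hm]; module
  have hanti := smul_sub_eq_of_tangency hny hnm hnn hc hcross hp
  calc σ • y = (F * (σ ^ 2 - τ)) • y := by rw [mul_eq_of_tangency hny hnm hnn hp]
    _ = σ • F • (σ • y - n) + F • (σ • n - τ • y) := by module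
    _ = σ • σ • m + (n - τ • m) := by rw [hsum, hanti]
    _ = (σ ^ 2 - τ) • m + n := by module

end Tangency

theorem Matrix.IsSymm.mulVec_dotProduct {R ι : Type*} [CommSemiring R] [Fintype ι]
    {M : Matrix ι ι R} (hM : M.IsSymm) (u v : ι → R) : M *ᵥ u ⬝ᵥ v = u ⬝ᵥ M *ᵥ v := by
  conv_rhs => rw [← hM.eq]
  rw [dotProduct_transpose_mulVec, dotProduct_comm]

theorem one_sub_vecMulVec_self_mul_mulVec_eq_zero {R ι : Type*} [CommRing R] [Fintype ι]
    [DecidableEq ι] {N : ι → R} {M : Matrix ι ι R} {k : R} (hN : N ⬝ᵥ N = 1)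
    (hM : M *ᵥ N = k • N) : ((1 - vecMulVec N N) * M) *ᵥ N = 0 := by
  rw [← mulVec_mulVec, hM, mulVec_smul, sub_mulVec, vecMulVec_mulVec, hN, one_mulVec,
    MulOpposite.op_one, one_smul, sub_self, smul_zero]

theorem tangency_fraction_confocal_general
    (A sA : Matrix (Fin 3) (Fin 3) ℂ) (x₀ N₀ : Fin 3 → ℂ) (Fp Fm : ℂ)
    (hAdet : A.det ≠ 0)
    (hsq : sA * sA = A) (hsAsym : sAᵀ = sA)
    (hN : N₀ ⬝ᵥ N₀ = 1)
    (hnd : (N₀ ⬝ᵥ x₀) ^ 2 - N₀ ⬝ᵥ (A⁻¹ *ᵥ N₀) ≠ 0)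
    (hp : Fp • ((N₀ ⬝ᵥ x₀) • (sA *ᵥ x₀)
            + Complex.I • ((sA⁻¹ *ᵥ N₀) ⨯₃ (sA *ᵥ x₀)) - sA⁻¹ *ᵥ N₀)
        = (N₀ ⬝ᵥ x₀) • (sA *ᵥ N₀) + Complex.I • ((sA⁻¹ *ᵥ N₀) ⨯₃ (sA *ᵥ N₀)))
    (hm : Fm • ((N₀ ⬝ᵥ x₀) • (sA *ᵥ x₀)
            - Complex.I • ((sA⁻¹ *ᵥ N₀) ⨯₃ (sA *ᵥ x₀)) - sA⁻¹ *ᵥ N₀)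
        = (N₀ ⬝ᵥ x₀) • (sA *ᵥ N₀) - Complex.I • ((sA⁻¹ *ᵥ N₀) ⨯₃ (sA *ᵥ N₀))) :
    Fp = (N₀ ⬝ᵥ x₀) / ((N₀ ⬝ᵥ x₀) ^ 2 - N₀ ⬝ᵥ (A⁻¹ *ᵥ N₀)) ∧
    Fm = (N₀ ⬝ᵥ x₀) / ((N₀ ⬝ᵥ x₀) ^ 2 - N₀ ⬝ᵥ (A⁻¹ *ᵥ N₀)) ∧
    ((1 - vecMulVec N₀ N₀) * (A⁻¹ - vecMulVec x₀ x₀)) *ᵥ N₀ = 0 := by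
  have hS : IsUnit sA.det :=
    isUnit_iff_ne_zero.2 fun h => hAdet (by rw [← hsq, det_mul, h, mul_zero])
  have hAinv : A⁻¹ = sA⁻¹ * sA⁻¹ := by rw [← hsq, Matrix.mul_inv_rev]
  have hinv : sA⁻¹.IsSymm := IsSymm.inv hsAsym
  have hny : sA⁻¹ *ᵥ N₀ ⬝ᵥ sA *ᵥ x₀ = N₀ ⬝ᵥ x₀ := by
    rw [hinv.mulVec_dotProduct, mulVec_mulVec, nonsing_inv_mul _ hS, one_mulVec]
  have hnm : sA⁻¹ *ᵥ N₀ ⬝ᵥ sA *ᵥ N₀ = 1 := by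
    rw [hinv.mulVec_dotProduct, mulVec_mulVec, nonsing_inv_mul _ hS, one_mulVec, hN]
  have hnn : sA⁻¹ *ᵥ N₀ ⬝ᵥ sA⁻¹ *ᵥ N₀ = N₀ ⬝ᵥ A⁻¹ *ᵥ N₀ := by
    rw [hinv.mulVec_dotProduct, mulVec_mulVec, ← hAinv]
  have hFp := (eq_div_iff hnd).2 (mul_eq_of_tangency hny hnm hnn hp)
  have hFm := (eq_div_iff hnd).2 <| mul_eq_of_tangency (c := -Complex.I) hny hnm hnn
    (by simpa only [neg_smul, ← sub_eq_add_neg] using hm)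
  refine ⟨hFp, hFm, one_sub_vecMulVec_self_mul_mulVec_eq_zero hN
    (k := N₀ ⬝ᵥ A⁻¹ *ᵥ N₀ - (N₀ ⬝ᵥ x₀) ^ 2) ?_⟩
  obtain rfl : Fm = Fp := hFm.trans hFp.symm
  have key := congrArg (sA⁻¹ *ᵥ ·) <|
    smul_eq_add_of_tangency two_ne_zero Complex.I_ne_zero hny hnm hnn hp hm
  simp only [mulVec_add, mulVec_smul, mulVec_mulVec, nonsing_inv_mul _ hS, one_mulVec,
    ← hAinv] at key
  rw [sub_mulVec, vecMulVec_mulVec, op_smul_eq_smul, dotProduct_comm, key]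
  module

/-- If the tangency-configuration fraction is independent of the ruling parameter for
both families of rulings of the confocal quadric (i.e. the scalars `F_±` satisfy the
stated vector equations built from the Ivory affinity data `√A, x₀, N₀`), then
`F_± = N₀ᵀx₀/((N₀ᵀx₀)² − N₀ᵀA⁻¹N₀)` and `(I₃ − N₀N₀ᵀ)(A⁻¹ − x₀x₀ᵀ)N₀ = 0`. -/
theorem tangency_fraction_confocal
    (A sA : Matrix (Fin 3) (Fin 3) ℂ) (x₀ N₀ : Fin 3 → ℂ) (Fp Fm : ℂ)
    (hAsym : Aᵀ = A) (hAdet : A.det ≠ 0)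
    (hsq : sA * sA = A) (hsAsym : sAᵀ = sA)
    (hN : N₀ ⬝ᵥ N₀ = 1)
    (hnd : (N₀ ⬝ᵥ x₀) ^ 2 - N₀ ⬝ᵥ (A⁻¹ *ᵥ N₀) ≠ 0)
    (hp : Fp • ((N₀ ⬝ᵥ x₀) • (sA *ᵥ x₀)
            + Complex.I • ((sA⁻¹ *ᵥ N₀) ⨯₃ (sA *ᵥ x₀)) - sA⁻¹ *ᵥ N₀)
        = (N₀ ⬝ᵥ x₀) • (sA *ᵥ N₀) + Complex.I • ((sA⁻¹ *ᵥ N₀) ⨯₃ (sA *ᵥ N₀)))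
    (hm : Fm • ((N₀ ⬝ᵥ x₀) • (sA *ᵥ x₀)
            - Complex.I • ((sA⁻¹ *ᵥ N₀) ⨯₃ (sA *ᵥ x₀)) - sA⁻¹ *ᵥ N₀)
        = (N₀ ⬝ᵥ x₀) • (sA *ᵥ N₀) - Complex.I • ((sA⁻¹ *ᵥ N₀) ⨯₃ (sA *ᵥ N₀))) :
    Fp = (N₀ ⬝ᵥ x₀) / ((N₀ ⬝ᵥ x₀) ^ 2 - N₀ ⬝ᵥ (A⁻¹ *ᵥ N₀)) ∧
    Fm = (N₀ ⬝ᵥ x₀) / ((N₀ ⬝ᵥ x₀) ^ 2 - N₀ ⬝ᵥ (A⁻¹ *ᵥ N₀)) ∧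
    ((1 - vecMulVec N₀ N₀) * (A⁻¹ - vecMulVec x₀ x₀)) *ᵥ N₀ = 0 :=
  tangency_fraction_confocal_general A sA x₀ N₀ Fp Fm hAdet hsq hsAsym hN hnd hp hm
end

section
/- Let A⁻¹ = a₁I₃ + ae₃e₃ᵀ with a₁ ∈ ℂ∖{0,−a}, a ∈ ℂ∖{0} (a quadric of revolution x₀ᵀAx₀ = 1), and write a point of the quadric as x₀ = √x e₁ + √y e₂ + √z e₃ with the graph condition z = z(x+y). Then the tangency/integrability condition x ∂ₓz + y ∂ᵧz − z = −a ∂ₓz/(1+∂ₓz) = −a ∂ᵧz/(1+∂ᵧz) forces ∂ₓz = ∂ᵧz, and if moreover ∂²ₓz = 0 then z(x+y) = c(1 + (x+y)/(a−c)) for some constant c ∈ ℂ∖{0,a}, i.e. x₀ lies on a quadric of the confocal family x_wᵀA(I₃ − wA)⁻¹x_w = 1. -/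
/-!
The two slopes `p = ∂ₓz`, `q = ∂ᵧz` are equated through `-a p/(1+p) = -a q/(1+q)`, and
`p ↦ p/(1+p)` is injective. For the second part `z'' = 0` makes `z' ≡ m` constant, so the
Clairaut-type equation `s z' − z = −a z'/(1+z')` gives the affine function
`z(s) = m s + c` with `c = a m/(1+m)`; since `a − c = a/(1+m)`, this is `c(1 + s/(a−c))`.
-/

theorem eq_of_div_one_add_eq_div_one_add {K : Type*} [Field K] {p q : K}
    (hp : 1 + p ≠ 0) (hq : 1 + q ≠ 0) (h : p / (1 + p) = q / (1 + q)) : p = q := by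
  rw [div_eq_div_iff hp hq] at h
  linear_combination h

section ClairautIntercept

variable {K : Type*} [Field K] {a m : K}

def clairautIntercept (a m : K) : K := a * m / (1 + m)

theorem clairautIntercept_eq_of_clairaut_equation {s z : K}
    (h : s * m - z = -a * m / (1 + m)) : z = s * m + clairautIntercept a m := by
  rw [clairautIntercept]
  linear_combination -h

theorem sub_clairautIntercept (hm : 1 + m ≠ 0) : a - clairautIntercept a m = a / (1 + m) := by
  rw [clairautIntercept]
  field_simp
  ring

theorem clairautIntercept_ne_zero (ha : a ≠ 0) (hm₀ : m ≠ 0) (hm : 1 + m ≠ 0) :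
    clairautIntercept a m ≠ 0 :=
  div_ne_zero (mul_ne_zero ha hm₀) hm

theorem clairautIntercept_ne_self (ha : a ≠ 0) (hm : 1 + m ≠ 0) : clairautIntercept a m ≠ a := by
  intro h
  have : a / (1 + m) = 0 := by rw [← sub_clairautIntercept hm, h, sub_self]
  exact div_ne_zero ha hm this

theorem clairautIntercept_mul_one_add_div (ha : a ≠ 0) (hm : 1 + m ≠ 0) (s : K) :
    clairautIntercept a m * (1 + s / (a - clairautIntercept a m)) =
      s * m + clairautIntercept a m := by
  rw [sub_clairautIntercept hm, clairautIntercept]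
  field_simp
  ring

end ClairautIntercept

/-- For the quadric of revolution with `A⁻¹ = a₁I₃ + ae₃e₃ᵀ`: (i) the
tangency/integrability condition
`x ∂ₓz + y ∂ᵧz − z = −a ∂ₓz/(1+∂ₓz) = −a ∂ᵧz/(1+∂ᵧz)` forces `∂ₓz = ∂ᵧz`
(so `z = z(x+y)`), and (ii) a function `z` of `s = x+y` satisfying
`s z' − z = −a z'/(1+z')` with `z'' = 0` is `z(s) = c(1 + s/(a−c))` for some constant
`c ∈ ℂ \ {0, a}` — i.e. the point lies on a quadric of the confocal family. -/
theorem revolution_confocal_characterization (a : ℂ) (ha : a ≠ 0) :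
    (∀ x y zv zx zy : ℂ, 1 + zx ≠ 0 → 1 + zy ≠ 0 →
      x * zx + y * zy - zv = -a * zx / (1 + zx) →
      x * zx + y * zy - zv = -a * zy / (1 + zy) → zx = zy) ∧
    (∀ z : ℂ → ℂ, Differentiable ℂ z →
      (∀ s, 1 + deriv z s ≠ 0) →
      (∀ s, s * deriv z s - z s = -a * deriv z s / (1 + deriv z s)) →
      (∀ s, deriv (deriv z) s = 0) →
      (∃ s, deriv z s ≠ 0) →
      ∃ c : ℂ, c ≠ 0 ∧ c ≠ a ∧ ∀ s, z s = c * (1 + s / (a - c))) := by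
  refine ⟨fun x y zv zx zy hx hy h₁ h₂ ↦ ?_, ?_⟩
  · refine eq_of_div_one_add_eq_div_one_add hx hy (mul_left_cancel₀ (neg_ne_zero.mpr ha) ?_)
    simpa only [mul_div_assoc] using h₁.symm.trans h₂
  · rintro z hz hne hode hzz ⟨s₀, hs₀⟩
    set m := deriv z 0
    have hslope (s : ℂ) : deriv z s = m := is_const_of_deriv_eq_zero hz.deriv hzz s 0
    have hm : 1 + m ≠ 0 := hne 0
    refine ⟨clairautIntercept a m, clairautIntercept_ne_zero ha (hslope s₀ ▸ hs₀) hm,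
      clairautIntercept_ne_self ha hm, fun s ↦ ?_⟩
    have haffine : z s = s * m + clairautIntercept a m :=
      clairautIntercept_eq_of_clairaut_equation (hslope s ▸ hode s)
    rw [haffine, clairautIntercept_mul_one_add_div ha hm]
end
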